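/- arXiv:1710.06959 — 4 statements merged into one kernel-verified Lean document; each statement's English description precedes it below -/
import Mathlib

section
/- Let Ψ : ℝ^d → ℝ admit spectral density g and Φ : ℝ^d → ℝ admit spectral density h, with g(ω) ≤ A₁² h(ω) for almost every ω, where A₁ > 0. Then for every n ≥ 1, all points x, x_1, …, x_n ∈ ℝ^d and every u ∈ ℝ^n, u^T K₁ u − 2 u^T r₁(x) + Ψ(0) ≤ A₁² (u^T K u − 2 u^T r(x) + Φ(0)), where K₁ = (Ψ(x_j − x_k))_{jk}, K = (Φ(x_j − x_k))_{jk}, r₁(x) = (Ψ(x − x_1), …, Ψ(x − x_n))^T and r(x) = (Φ(x − x_1), …, Φ(x − x_n))^T. -/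
/-!
By the spectral representation, the kriging mean squared error under `Ψ` is
`∫ |e^{i⟪x, ω⟫} - ∑ⱼ uⱼ e^{i⟪Xⱼ, ω⟫}|² g(ω) dω`: the form is linear in the kernel and, for the
kernel `y ↦ cos ⟪y, ω⟫`, it is that squared modulus. The weight being nonnegative, the
domination `g ≤ A₁² h` integrates to the claimed inequality.
-/

open MeasureTheory
open scoped RealInnerProductSpace BigOperators

noncomputable section

/-- A kernel `Ψ : ℝ^d → ℝ` admits spectral density `g` if `g` is nonnegative,
Lebesgue integrable, and `Ψ x = ∫ cos ⟪x, ω⟫ g(ω) dω` for all `x`. -/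
def HasSpectralDensity {d : ℕ} (Ψ g : EuclideanSpace ℝ (Fin d) → ℝ) : Prop :=
  (∀ ω, 0 ≤ g ω) ∧ Integrable g ∧
    ∀ x, Ψ x = ∫ ω, Real.cos ⟪x, ω⟫ * g ω

section KrigingMSE

variable {E ι : Type*} [AddGroup E] [Fintype ι]

/-- The mean squared error `E |Z x - ∑ j, u j * Z (X j)|²` of a linear predictor, for a stationary
process `Z` with covariance `Ψ`. -/
def krigingMSE (Ψ : E → ℝ) (x : E) (X : ι → E) (u : ι → ℝ) : ℝ :=
  (∑ j, ∑ k, u j * u k * Ψ (X j - X k)) - 2 * (∑ j, u j * Ψ (x - X j)) + Ψ 0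

lemma krigingMSE_mul_const (Ψ : E → ℝ) (c : ℝ) (x : E) (X : ι → E) (u : ι → ℝ) :
    krigingMSE (fun y => Ψ y * c) x X u = krigingMSE Ψ x X u * c := by
  simp only [krigingMSE, sub_mul, add_mul, Finset.sum_mul, mul_assoc]

lemma krigingMSE_cos_eq (a : ℝ) (b u : ι → ℝ) :
    krigingMSE Real.cos a b u =
      (Real.cos a - ∑ j, u j * Real.cos (b j)) ^ 2 +
        (Real.sin a - ∑ j, u j * Real.sin (b j)) ^ 2 := by
  have hsq : (∑ j, u j * Real.cos (b j)) ^ 2 + (∑ j, u j * Real.sin (b j)) ^ 2 =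
      ∑ j, ∑ k, u j * u k * Real.cos (b j - b k) := by
    simp only [sq, Finset.sum_mul_sum, ← Finset.sum_add_distrib, Real.cos_sub]
    exact Finset.sum_congr rfl fun j _ => Finset.sum_congr rfl fun k _ => by ring
  have hcross : Real.cos a * (∑ j, u j * Real.cos (b j)) + Real.sin a * ∑ j, u j * Real.sin (b j) =
      ∑ j, u j * Real.cos (a - b j) := by
    simp only [Finset.mul_sum, ← Finset.sum_add_distrib, Real.cos_sub]
    exact Finset.sum_congr rfl fun j _ => by ring
  rw [krigingMSE, Real.cos_zero, ← hsq, ← hcross]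
  linear_combination -Real.sin_sq_add_cos_sq a

variable {α : Type*} [MeasurableSpace α] {μ : Measure α}

lemma integrable_krigingMSE {F : E → α → ℝ} (hF : ∀ y, Integrable (F y) μ)
    (x : E) (X : ι → E) (u : ι → ℝ) :
    Integrable (fun ω => krigingMSE (F · ω) x X u) μ := by
  unfold krigingMSE
  fun_prop

lemma integral_krigingMSE {F : E → α → ℝ} (hF : ∀ y, Integrable (F y) μ)
    (x : E) (X : ι → E) (u : ι → ℝ) :
    ∫ ω, krigingMSE (F · ω) x X u ∂μ = krigingMSE (fun y => ∫ ω, F y ω ∂μ) x X u := by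
  unfold krigingMSE
  rw [integral_add (by fun_prop) (hF 0), integral_sub (by fun_prop) (by fun_prop),
    integral_const_mul, integral_finsetSum _ fun j _ => by fun_prop,
    integral_finsetSum _ fun j _ => by fun_prop]
  simp only [integral_const_mul, integral_finsetSum _ fun k _ => (hF _).const_mul _]

end KrigingMSE

section SpectralRepresentation

variable {E ι : Type*} [NormedAddCommGroup E] [InnerProductSpace ℝ E] [Fintype ι]

lemma krigingMSE_cos_inner_nonneg (ω x : E) (X : ι → E) (u : ι → ℝ) :
    0 ≤ krigingMSE (fun y => Real.cos ⟪y, ω⟫) x X u := by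
  have h : krigingMSE (fun y => Real.cos ⟪y, ω⟫) x X u =
      krigingMSE Real.cos ⟪x, ω⟫ (⟪X ·, ω⟫) u := by
    simp only [krigingMSE, inner_sub_left, inner_zero_left]
  rw [h, krigingMSE_cos_eq]
  positivity

variable [MeasurableSpace E] [OpensMeasurableSpace E] {μ : Measure E} {g : E → ℝ}

lemma MeasureTheory.Integrable.cos_inner_mul (hg : Integrable g μ) (y : E) :
    Integrable (fun ω => Real.cos ⟪y, ω⟫ * g ω) μ :=
  hg.bdd_mul (by fun_prop) (c := 1) (.of_forall fun ω => by simpa using Real.abs_cos_le_one _)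

lemma MeasureTheory.Integrable.krigingMSE_cos_inner_mul (hg : Integrable g μ)
    (x : E) (X : ι → E) (u : ι → ℝ) :
    Integrable (fun ω => krigingMSE (fun y => Real.cos ⟪y, ω⟫) x X u * g ω) μ := by
  simpa only [krigingMSE_mul_const] using integrable_krigingMSE hg.cos_inner_mul x X u

lemma krigingMSE_eq_integral {Ψ : E → ℝ} (hg : Integrable g μ)
    (hΨ : ∀ y, Ψ y = ∫ ω, Real.cos ⟪y, ω⟫ * g ω ∂μ) (x : E) (X : ι → E) (u : ι → ℝ) :
    krigingMSE Ψ x X u = ∫ ω, krigingMSE (fun y => Real.cos ⟪y, ω⟫) x X u * g ω ∂μ := by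
  simp only [← krigingMSE_mul_const, integral_krigingMSE hg.cos_inner_mul, ← hΨ]

end SpectralRepresentation

theorem kriging_mse_domination_general {d : ℕ}
    (Ψ g Φ h : EuclideanSpace ℝ (Fin d) → ℝ)
    (hΨ : HasSpectralDensity Ψ g) (hΦ : HasSpectralDensity Φ h)
    (A₁ : ℝ)
    (hdom : ∀ᵐ ω ∂(volume : Measure (EuclideanSpace ℝ (Fin d))), g ω ≤ A₁ ^ 2 * h ω)
    (n : ℕ) (x : EuclideanSpace ℝ (Fin d))
    (X : Fin n → EuclideanSpace ℝ (Fin d)) (u : Fin n → ℝ) :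
    (∑ j, ∑ k, u j * u k * Ψ (X j - X k)) - 2 * (∑ j, u j * Ψ (x - X j)) + Ψ 0 ≤
      A₁ ^ 2 * ((∑ j, ∑ k, u j * u k * Φ (X j - X k)) - 2 * (∑ j, u j * Φ (x - X j)) + Φ 0) := by
  obtain ⟨-, hg, hΨg⟩ := hΨ
  obtain ⟨-, hh, hΦh⟩ := hΦ
  change krigingMSE Ψ x X u ≤ A₁ ^ 2 * krigingMSE Φ x X u
  rw [krigingMSE_eq_integral hg hΨg, krigingMSE_eq_integral hh hΦh, ← integral_const_mul]
  refine integral_mono_ae (hg.krigingMSE_cos_inner_mul x X u)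
    ((hh.krigingMSE_cos_inner_mul x X u).const_mul _) ?_
  filter_upwards [hdom] with ω hω
  calc _ ≤ krigingMSE (fun y => Real.cos ⟪y, ω⟫) x X u * (A₁ ^ 2 * h ω) :=
        mul_le_mul_of_nonneg_left hω (krigingMSE_cos_inner_nonneg ω x X u)
    _ = _ := by ring

theorem kriging_mse_domination {d : ℕ}
    (Ψ g Φ h : EuclideanSpace ℝ (Fin d) → ℝ)
    (hΨ : HasSpectralDensity Ψ g) (hΦ : HasSpectralDensity Φ h)
    (A₁ : ℝ) (hA₁ : 0 < A₁)
    (hdom : ∀ᵐ ω ∂(volume : Measure (EuclideanSpace ℝ (Fin d))), g ω ≤ A₁ ^ 2 * h ω)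
    (n : ℕ) (hn : 1 ≤ n) (x : EuclideanSpace ℝ (Fin d))
    (X : Fin n → EuclideanSpace ℝ (Fin d)) (u : Fin n → ℝ) :
    (∑ j, ∑ k, u j * u k * Ψ (X j - X k)) - 2 * (∑ j, u j * Ψ (x - X j)) + Ψ 0 ≤
      A₁ ^ 2 * ((∑ j, ∑ k, u j * u k * Φ (X j - X k)) - 2 * (∑ j, u j * Φ (x - X j)) + Φ 0) :=
  kriging_mse_domination_general Ψ g Φ h hΨ hΦ A₁ hdom n x X u
end
end

section
/- Let Ψ : ℝ^d → ℝ admit spectral density g and Φ : ℝ^d → ℝ admit spectral density h, with g(ω) ≤ A₁² h(ω) for almost every ω, where A₁ > 0. Let x_1, …, x_n ∈ ℝ^d be distinct points such that the matrix K = (Φ(x_j − x_k))_{jk} is positive definite. Then for every x ∈ ℝ^d, 0 ≤ Ψ(0) − 2 r(x)^T K^{-1} r₁(x) + r(x)^T K^{-1} K₁ K^{-1} r(x) ≤ A₁² (Φ(0) − r(x)^T K^{-1} r(x)), where K₁ = (Ψ(x_j − x_k))_{jk}, r₁(x) = (Ψ(x − x_1), …, Ψ(x − x_n))^T and r(x)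 = (Φ(x − x_1), …, Φ(x − x_n))^T. -/
open MeasureTheory Matrix
open scoped RealInnerProductSpace BigOperators

noncomputable section

/-! With the kriging weights `c = K⁻¹ r`, both sides are mean squared errors of the same linear
predictor `∑ j, c j * Z (X j)` of `Z x`: the left one under the covariance `Ψ`, the right one
under `Φ` (because `K c = r`). Such an error is the quadratic form
`∑ i j, a i * a j * Ψ (p i - p j)` at the points `x, X 1, …, X n` with coefficients
`1, -c 1, …, -c n`, and the spectral representation turns it into
`∫ |∑ i, a i * exp (I ⟪p i, ω⟫)|² g ω`. That integral is nonnegative and monotone in the density,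
so `g ≤ A₁ ^ 2 * h` a.e. gives the bound. -/

open Real

lemma sq_sum_mul_cos_add_sq_sum_mul_sin {ι : Type*} [Fintype ι] (a θ : ι → ℝ) :
    (∑ i, a i * cos (θ i)) ^ 2 + (∑ i, a i * sin (θ i)) ^ 2 =
      ∑ i, ∑ j, a i * a j * cos (θ i - θ j) := by
  simp only [sq, Finset.sum_mul_sum, ← Finset.sum_add_distrib, cos_sub]
  exact Finset.sum_congr rfl fun i _ => Finset.sum_congr rfl fun j _ => by ring

/-- Mean squared error of the linear predictor `∑ j, c j * Z (X j)` of `Z x`, for a stationary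
process `Z` with covariance kernel `Ψ`. -/
def linearPredictorMSE {G ι : Type*} [Sub G] [Zero G] [Fintype ι] (Ψ : G → ℝ) (x : G)
    (X : ι → G) (c : ι → ℝ) : ℝ :=
  Ψ 0 - 2 * (c ⬝ᵥ fun j => Ψ (x - X j)) + c ⬝ᵥ (of fun j k => Ψ (X j - X k)) *ᵥ c

/-- The index `none` stands for the prediction point `x`, with coefficient `1`. -/
lemma linearPredictorMSE_eq_sum_option {G ι : Type*} [AddGroup G] [Fintype ι] {Ψ : G → ℝ}
    (hΨ : ∀ v, Ψ (-v) = Ψ v) (x : G) (X : ι → G) (c : ι → ℝ) :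
    linearPredictorMSE Ψ x X c =
      ∑ i : Option ι, ∑ j : Option ι,
        i.elim 1 (-c ·) * j.elim 1 (-c ·) * Ψ (i.elim x X - j.elim x X) := by
  have hsym : ∀ j, Ψ (X j - x) = Ψ (x - X j) := fun j => by rw [← neg_sub, hΨ]
  simp only [linearPredictorMSE, Fintype.sum_option, Option.elim, sub_self, hsym, dotProduct,
    mulVec, of_apply, Finset.mul_sum, Finset.sum_add_distrib]
  have hquad : ∀ i k, c i * (Ψ (X i - X k) * c k) = c i * c k * Ψ (X i - X k) :=
    fun i k => by ring
  simp only [hquad, ← Finset.mul_sum, neg_mul, mul_neg, neg_neg, one_mul, mul_one,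
    Finset.sum_neg_distrib]
  ring

namespace HasSpectralDensity

variable {d : ℕ} {Ψ g Φ h : EuclideanSpace ℝ (Fin d) → ℝ}

lemma integrable_cos_inner_mul (hΨ : HasSpectralDensity Ψ g) (v : EuclideanSpace ℝ (Fin d)) :
    Integrable fun ω => cos ⟪v, ω⟫ * g ω :=
  hΨ.2.1.bdd_mul (c := 1) (by fun_prop)
    (.of_forall fun ω => by simpa using abs_cos_le_one _)

lemma apply_neg (hΨ : HasSpectralDensity Ψ g) (v : EuclideanSpace ℝ (Fin d)) :
    Ψ (-v) = Ψ v := by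
  simp [hΨ.2.2, inner_neg_left]

variable {ι : Type*} [Fintype ι]

section QuadraticForm

variable (p : ι → EuclideanSpace ℝ (Fin d)) (a : ι → ℝ)

lemma integrable_sum_sum_cos_mul (hΨ : HasSpectralDensity Ψ g) :
    Integrable fun ω => (∑ i, ∑ j, a i * a j * cos ⟪p i - p j, ω⟫) * g ω := by
  simp only [Finset.sum_mul, mul_assoc (a _ * a _)]
  exact integrable_finsetSum _ fun i _ => integrable_finsetSum _ fun j _ =>
    (hΨ.integrable_cos_inner_mul _).const_mul _

lemma sum_sum_mul_apply_sub_eq_integral (hΨ : HasSpectralDensity Ψ g) :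
    ∑ i, ∑ j, a i * a j * Ψ (p i - p j) =
      ∫ ω, (∑ i, ∑ j, a i * a j * cos ⟪p i - p j, ω⟫) * g ω := by
  simp only [Finset.sum_mul, mul_assoc (a _ * a _)]
  rw [integral_finsetSum _ fun i _ => integrable_finsetSum _ fun j _ =>
    (hΨ.integrable_cos_inner_mul _).const_mul _]
  refine Finset.sum_congr rfl fun i _ => ?_
  rw [integral_finsetSum _ fun j _ => (hΨ.integrable_cos_inner_mul _).const_mul _]
  simp only [integral_const_mul, ← hΨ.2.2]

lemma sum_sum_mul_cos_inner_sub_nonneg (ω : EuclideanSpace ℝ (Fin d)) :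
    0 ≤ ∑ i, ∑ j, a i * a j * cos ⟪p i - p j, ω⟫ := by
  simp only [inner_sub_left, ← sq_sum_mul_cos_add_sq_sum_mul_sin]
  positivity

lemma sum_sum_mul_apply_sub_nonneg (hΨ : HasSpectralDensity Ψ g) :
    0 ≤ ∑ i, ∑ j, a i * a j * Ψ (p i - p j) := by
  rw [hΨ.sum_sum_mul_apply_sub_eq_integral]
  exact integral_nonneg fun ω => mul_nonneg (sum_sum_mul_cos_inner_sub_nonneg p a ω) (hΨ.1 ω)

lemma sum_sum_mul_apply_sub_le (hΨ : HasSpectralDensity Ψ g) (hΦ : HasSpectralDensity Φ h)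
    {C : ℝ} (hdom : ∀ᵐ ω, g ω ≤ C * h ω) :
    ∑ i, ∑ j, a i * a j * Ψ (p i - p j) ≤ C * ∑ i, ∑ j, a i * a j * Φ (p i - p j) := by
  rw [hΨ.sum_sum_mul_apply_sub_eq_integral, hΦ.sum_sum_mul_apply_sub_eq_integral,
    ← integral_const_mul]
  refine integral_mono_ae (hΨ.integrable_sum_sum_cos_mul p a)
    ((hΦ.integrable_sum_sum_cos_mul p a).const_mul C) ?_
  filter_upwards [hdom] with ω hω
  calc _ ≤ (∑ i, ∑ j, a i * a j * cos ⟪p i - p j, ω⟫) * (C * h ω) :=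
        mul_le_mul_of_nonneg_left hω (sum_sum_mul_cos_inner_sub_nonneg p a ω)
    _ = _ := by ring

end QuadraticForm

variable (x : EuclideanSpace ℝ (Fin d)) (X : ι → EuclideanSpace ℝ (Fin d)) (c : ι → ℝ)

lemma linearPredictorMSE_nonneg (hΨ : HasSpectralDensity Ψ g) :
    0 ≤ linearPredictorMSE Ψ x X c := by
  rw [linearPredictorMSE_eq_sum_option hΨ.apply_neg]
  exact hΨ.sum_sum_mul_apply_sub_nonneg _ _

lemma linearPredictorMSE_le (hΨ : HasSpectralDensity Ψ g) (hΦ : HasSpectralDensity Φ h)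
    {C : ℝ} (hdom : ∀ᵐ ω, g ω ≤ C * h ω) :
    linearPredictorMSE Ψ x X c ≤ C * linearPredictorMSE Φ x X c := by
  rw [linearPredictorMSE_eq_sum_option hΨ.apply_neg,
    linearPredictorMSE_eq_sum_option hΦ.apply_neg]
  exact hΨ.sum_sum_mul_apply_sub_le _ _ hΦ hdom

end HasSpectralDensity

theorem kriging_pointwise_mse_bound_general {d : ℕ}
    (Ψ g Φ h : EuclideanSpace ℝ (Fin d) → ℝ)
    (hΨ : HasSpectralDensity Ψ g) (hΦ : HasSpectralDensity Φ h)
    (A₁ : ℝ)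
    (hdom : ∀ᵐ ω ∂(volume : Measure (EuclideanSpace ℝ (Fin d))), g ω ≤ A₁ ^ 2 * h ω)
    (n : ℕ) (X : Fin n → EuclideanSpace ℝ (Fin d))
    (K K₁ : Matrix (Fin n) (Fin n) ℝ)
    (hK : K = Matrix.of fun j k => Φ (X j - X k))
    (hK₁ : K₁ = Matrix.of fun j k => Ψ (X j - X k))
    (hKpd : K.PosDef)
    (x : EuclideanSpace ℝ (Fin d))
    (r r₁ : Fin n → ℝ)
    (hr : r = fun j => Φ (x - X j)) (hr₁ : r₁ = fun j => Ψ (x - X j)) :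
    0 ≤ Ψ 0 - 2 * (r ⬝ᵥ K⁻¹ *ᵥ r₁) + r ⬝ᵥ (K⁻¹ * K₁ * K⁻¹) *ᵥ r ∧
    Ψ 0 - 2 * (r ⬝ᵥ K⁻¹ *ᵥ r₁) + r ⬝ᵥ (K⁻¹ * K₁ * K⁻¹) *ᵥ r ≤
      A₁ ^ 2 * (Φ 0 - r ⬝ᵥ K⁻¹ *ᵥ r) := by
  have hKsymm : Kᵀ = K := by
    ext j k
    simp only [hK, transpose_apply, of_apply, ← neg_sub (X j), hΦ.apply_neg]
  have hKinv_symm : K⁻¹ᵀ = K⁻¹ := by rw [transpose_nonsing_inv, hKsymm]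
  have hdot : ∀ v w, v ⬝ᵥ K⁻¹ *ᵥ w = (K⁻¹ *ᵥ v) ⬝ᵥ w := fun v w => by
    rw [dotProduct_mulVec, ← mulVec_transpose, hKinv_symm]
  have hmse : Ψ 0 - 2 * (r ⬝ᵥ K⁻¹ *ᵥ r₁) + r ⬝ᵥ (K⁻¹ * K₁ * K⁻¹) *ᵥ r =
      linearPredictorMSE Ψ x X (K⁻¹ *ᵥ r) := by
    rw [linearPredictorMSE, ← mulVec_mulVec, ← mulVec_mulVec, hdot, hdot, hK₁, hr₁]
  have hpower : Φ 0 - r ⬝ᵥ K⁻¹ *ᵥ r = linearPredictorMSE Φ x X (K⁻¹ *ᵥ r) := by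
    have hsolve : K *ᵥ (K⁻¹ *ᵥ r) = r := by
      rw [mulVec_mulVec, mul_nonsing_inv _ hKpd.det_pos.ne'.isUnit, one_mulVec]
    rw [linearPredictorMSE, ← hK, ← hr, hsolve, hdot]
    ring
  rw [hmse, hpower]
  exact ⟨hΨ.linearPredictorMSE_nonneg x X _, hΨ.linearPredictorMSE_le x X _ hΦ hdom⟩

theorem kriging_pointwise_mse_bound {d : ℕ}
    (Ψ g Φ h : EuclideanSpace ℝ (Fin d) → ℝ)
    (hΨ : HasSpectralDensity Ψ g) (hΦ : HasSpectralDensity Φ h)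
    (A₁ : ℝ) (hA₁ : 0 < A₁)
    (hdom : ∀ᵐ ω ∂(volume : Measure (EuclideanSpace ℝ (Fin d))), g ω ≤ A₁ ^ 2 * h ω)
    (n : ℕ) (X : Fin n → EuclideanSpace ℝ (Fin d)) (hX : Function.Injective X)
    (K K₁ : Matrix (Fin n) (Fin n) ℝ)
    (hK : K = Matrix.of fun j k => Φ (X j - X k))
    (hK₁ : K₁ = Matrix.of fun j k => Ψ (X j - X k))
    (hKpd : K.PosDef)
    (x : EuclideanSpace ℝ (Fin d))
    (r r₁ : Fin n → ℝ)
    (hr : r = fun j => Φ (x - X j)) (hr₁ : r₁ = fun j => Ψ (x - X j)) :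
    0 ≤ Ψ 0 - 2 * (r ⬝ᵥ K⁻¹ *ᵥ r₁) + r ⬝ᵥ (K⁻¹ * K₁ * K⁻¹) *ᵥ r ∧
    Ψ 0 - 2 * (r ⬝ᵥ K⁻¹ *ᵥ r₁) + r ⬝ᵥ (K⁻¹ * K₁ * K⁻¹) *ᵥ r ≤
      A₁ ^ 2 * (Φ 0 - r ⬝ᵥ K⁻¹ *ᵥ r) :=
  kriging_pointwise_mse_bound_general Ψ g Φ h hΨ hΦ A₁ hdom n X K K₁ hK hK₁ hKpd x r r₁ hr hr₁
end
end

section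
/- For every α ∈ (0,1] and every A₀, A₁ > 0 there exists a constant C > 0, depending only on α, A₀ and A₁, with the following property. Suppose Ψ : ℝ^d → ℝ admits spectral density g and Φ : ℝ^d → ℝ admits spectral density h with Ψ(0) = Φ(0) = 1, g(ω) ≤ A₁² h(ω) for almost every ω, and ∫_{ℝ^d} ‖ω‖^α h(ω) dω ≤ A₀. Let x_1, …, x_n ∈ ℝ^d be distinct points such that K = (Φ(x_j − x_k))_{jk} is positive definite, let Ω ⊆ ℝ^d, and let P ∈ (0, 1] satisfy 1 − r(y)^T K^{-1} r(y) ≤ P² for all y ∈ Ω. Define, for x ∈ ℝ^d, e(x) = Ψ(0) − 2 r(x)^T K^{-1} r₁(x) + r(x)^T K^{-1} K₁ K^{-1} r(x) and, for x, x' ∈ ℝ^d, c(x,x') = Ψ(x − x') − r(x')^T K^{-1} r₁(x) − r₁(x')^T K^{-1} r(x) + r(x)^T K^{-1} K₁ K^{-1} r(x'), where K₁ = (Ψ(x_j − x_k))_{jk}, r₁(x) = (Ψ(x − x_1), …, Ψ(x − x_n))^T and r(x) = (Φ(x − x_1), …, Φ(x − x_n))^T. Then for all x, x' ∈ Ω,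 e(x) + e(x') − 2c(x,x') ≤ C · P · ‖x − x'‖^{α/4}. -/
open MeasureTheory Matrix
open scoped RealInnerProductSpace BigOperators

noncomputable section

lemma one_sub_cos_le {α : ℝ} (hα0 : 0 < α) (hα1 : α ≤ 1) (t : ℝ) :
    1 - Real.cos t ≤ 2 * |t| ^ α := by
  rcases le_or_gt |t| 1 with h | h
  · have h2 : Real.cos t = 1 - 2 * Real.sin (t/2)^2 := by
      have h3 : Real.cos (2 * (t/2)) = 2 * Real.cos (t/2)^2 - 1 := Real.cos_two_mul (t/2)
      rw [show 2 * (t/2) = t by ring] at h3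
      nlinarith [Real.sin_sq_add_cos_sq (t/2)]
    have h4 : Real.sin (t/2)^2 ≤ (t/2)^2 := by
      have := Real.abs_sin_le_abs (x := t/2)
      nlinarith [abs_nonneg (t/2), abs_nonneg (Real.sin (t/2)), sq_abs (t/2), sq_abs (Real.sin (t/2))]
    rcases eq_or_ne t 0 with rfl | ht
    · simpa using Real.rpow_nonneg le_rfl α
    · have hpos : 0 < |t| := abs_pos.2 ht
      have h5 : |t| ^ (2:ℝ) ≤ |t| ^ α := Real.rpow_le_rpow_of_exponent_ge hpos h (by linarith)
      have h6 : |t| ^ (2:ℝ) = t^2 := by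
        rw [show (2:ℝ) = ((2:ℕ):ℝ) by norm_num, Real.rpow_natCast, sq_abs]
      rw [h6] at h5
      have h7 : (0:ℝ) ≤ |t| ^ α := Real.rpow_nonneg (abs_nonneg t) α
      nlinarith
  · have h5 : (1:ℝ) ≤ |t| ^ α := Real.one_le_rpow h.le hα0.le
    nlinarith [Real.neg_one_le_cos t]

variable {d : ℕ}

lemma integrable_cos_mul {g : EuclideanSpace ℝ (Fin d) → ℝ} (hg : Integrable g)
    (c : EuclideanSpace ℝ (Fin d)) :
    Integrable fun ω => Real.cos ⟪c, ω⟫ * g ω := by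
  refine hg.bdd_mul (c := 1) ?_ (Filter.Eventually.of_forall fun x => by simpa using Real.abs_cos_le_one _)
  exact (Real.continuous_cos.comp (continuous_const.inner continuous_id)).aestronglyMeasurable

lemma spectral_sum {Ψ g : EuclideanSpace ℝ (Fin d) → ℝ} (hΨ : HasSpectralDensity Ψ g)
    {ι : Type*} [Fintype ι] (q : ι → EuclideanSpace ℝ (Fin d)) (u v : ι → ℝ) :
    ∑ j, ∑ k, u j * v k * Ψ (q j - q k)
      = ∫ ω, ((∑ j, u j * Real.cos ⟪q j, ω⟫) * (∑ k, v k * Real.cos ⟪q k, ω⟫)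
            + (∑ j, u j * Real.sin ⟪q j, ω⟫) * (∑ k, v k * Real.sin ⟪q k, ω⟫)) * g ω := by
  have key : ∀ ω, ((∑ j, u j * Real.cos ⟪q j, ω⟫) * (∑ k, v k * Real.cos ⟪q k, ω⟫)
            + (∑ j, u j * Real.sin ⟪q j, ω⟫) * (∑ k, v k * Real.sin ⟪q k, ω⟫)) * g ω
      = ∑ j, ∑ k, u j * v k * (Real.cos ⟪q j - q k, ω⟫ * g ω) := by
    intro ω
    rw [Finset.sum_mul_sum, Finset.sum_mul_sum, ← Finset.sum_add_distrib, Finset.sum_mul]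
    refine Finset.sum_congr rfl fun j _ => ?_
    rw [← Finset.sum_add_distrib, Finset.sum_mul]
    refine Finset.sum_congr rfl fun k _ => ?_
    rw [inner_sub_left, Real.cos_sub]
    ring
  calc ∑ j, ∑ k, u j * v k * Ψ (q j - q k)
      = ∑ j, ∑ k, ∫ ω, u j * v k * (Real.cos ⟪q j - q k, ω⟫ * g ω) := by
        refine Finset.sum_congr rfl fun j _ => Finset.sum_congr rfl fun k _ => ?_
        rw [hΨ.2.2 (q j - q k), ← integral_const_mul]
    _ = ∫ ω, ∑ j, ∑ k, u j * v k * (Real.cos ⟪q j - q k, ω⟫ * g ω) := by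
        rw [integral_finset_sum]
        · exact Finset.sum_congr rfl fun j _ => (integral_finset_sum _
            fun k _ => (integrable_cos_mul hΨ.2.1 (q j - q k)).const_mul _).symm
        · exact fun j _ => integrable_finset_sum _
            fun k _ => (integrable_cos_mul hΨ.2.1 (q j - q k)).const_mul _
    _ = _ := by
        refine (integral_congr_ae (Filter.Eventually.of_forall fun ω => (key ω))).symm

lemma abs_trig_sum_le {ι : Type*} [Fintype ι] (q : ι → EuclideanSpace ℝ (Fin d))
    (u : ι → ℝ) (f : ℝ → ℝ) (hf : ∀ t, |f t| ≤ 1) (ω : EuclideanSpace ℝ (Fin d)) :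
    |∑ j, u j * f ⟪q j, ω⟫| ≤ ∑ j, |u j| := by
  refine (Finset.abs_sum_le_sum_abs _ _).trans (Finset.sum_le_sum fun j _ => ?_)
  rw [abs_mul]
  exact mul_le_of_le_one_right (abs_nonneg _) (hf _)

lemma cont_trig_sum {ι : Type*} [Fintype ι] (q : ι → EuclideanSpace ℝ (Fin d))
    (u : ι → ℝ) (f : ℝ → ℝ) (hf : Continuous f) :
    Continuous fun ω : EuclideanSpace ℝ (Fin d) => ∑ j, u j * f ⟪q j, ω⟫ :=
  continuous_finset_sum _ fun j _ =>
    continuous_const.mul (hf.comp (continuous_const.inner continuous_id))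

lemma integrable_trig_quad {h : EuclideanSpace ℝ (Fin d) → ℝ} (hh : Integrable h)
    {ι : Type*} [Fintype ι] (q : ι → EuclideanSpace ℝ (Fin d)) (u : ι → ℝ) :
    Integrable fun ω => ((∑ j, u j * Real.cos ⟪q j, ω⟫) * (∑ k, u k * Real.cos ⟪q k, ω⟫)
            + (∑ j, u j * Real.sin ⟪q j, ω⟫) * (∑ k, u k * Real.sin ⟪q k, ω⟫)) * h ω := by
  refine hh.bdd_mul (c := 2 * (∑ j, |u j|)^2) ?_ (Filter.Eventually.of_forall fun ω => ?_)
  · exact (((cont_trig_sum q u _ Real.continuous_cos).mul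
      (cont_trig_sum q u _ Real.continuous_cos)).add
      ((cont_trig_sum q u _ Real.continuous_sin).mul
      (cont_trig_sum q u _ Real.continuous_sin))).aestronglyMeasurable
  · have hc := abs_trig_sum_le q u Real.cos (fun t => Real.abs_cos_le_one t) ω
    have hs := abs_trig_sum_le q u Real.sin (fun t => Real.abs_sin_le_one t) ω
    have h1 := abs_mul (∑ j, u j * Real.cos ⟪q j, ω⟫) (∑ k, u k * Real.cos ⟪q k, ω⟫)
    have h2 := abs_mul (∑ j, u j * Real.sin ⟪q j, ω⟫) (∑ k, u k * Real.sin ⟪q k, ω⟫)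
    have h3 := abs_add_le ((∑ j, u j * Real.cos ⟪q j, ω⟫) * (∑ k, u k * Real.cos ⟪q k, ω⟫))
      ((∑ j, u j * Real.sin ⟪q j, ω⟫) * (∑ k, u k * Real.sin ⟪q k, ω⟫))
    have h0 : (0:ℝ) ≤ ∑ j, |u j| := Finset.sum_nonneg fun j _ => abs_nonneg _
    simp only [Real.norm_eq_abs]
    nlinarith [abs_nonneg (∑ j, u j * Real.cos ⟪q j, ω⟫),
      abs_nonneg (∑ j, u j * Real.sin ⟪q j, ω⟫)]

lemma spectral_nonneg {Φ h : EuclideanSpace ℝ (Fin d) → ℝ} (hΦ : HasSpectralDensity Φ h)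
    {ι : Type*} [Fintype ι] (q : ι → EuclideanSpace ℝ (Fin d)) (u : ι → ℝ) :
    0 ≤ ∑ j, ∑ k, u j * u k * Φ (q j - q k) := by
  rw [spectral_sum hΦ q u u]
  exact integral_nonneg fun ω => mul_nonneg
    (add_nonneg (mul_self_nonneg _) (mul_self_nonneg _)) (hΦ.1 ω)

lemma spectral_compare {Ψ g Φ h : EuclideanSpace ℝ (Fin d) → ℝ}
    (hΨ : HasSpectralDensity Ψ g) (hΦ : HasSpectralDensity Φ h) {A₁ : ℝ}
    (hgh : ∀ᵐ ω ∂(volume : Measure (EuclideanSpace ℝ (Fin d))), g ω ≤ A₁ ^ 2 * h ω)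
    {ι : Type*} [Fintype ι] (q : ι → EuclideanSpace ℝ (Fin d)) (u : ι → ℝ) :
    ∑ j, ∑ k, u j * u k * Ψ (q j - q k)
      ≤ A₁ ^ 2 * ∑ j, ∑ k, u j * u k * Φ (q j - q k) := by
  rw [spectral_sum hΨ q u u, spectral_sum hΦ q u u, ← integral_const_mul]
  refine integral_mono_ae (integrable_trig_quad hΨ.2.1 q u)
    (((integrable_trig_quad hΦ.2.1 q u).const_mul _)) ?_
  filter_upwards [hgh] with ω hω
  have hnn : (0:ℝ) ≤ (∑ j, u j * Real.cos ⟪q j, ω⟫) * (∑ k, u k * Real.cos ⟪q k, ω⟫)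
            + (∑ j, u j * Real.sin ⟪q j, ω⟫) * (∑ k, u k * Real.sin ⟪q k, ω⟫) :=
    add_nonneg (mul_self_nonneg _) (mul_self_nonneg _)
  calc _ ≤ ((∑ j, u j * Real.cos ⟪q j, ω⟫) * (∑ k, u k * Real.cos ⟪q k, ω⟫)
            + (∑ j, u j * Real.sin ⟪q j, ω⟫) * (∑ k, u k * Real.sin ⟪q k, ω⟫)) * (A₁^2 * h ω) :=
        mul_le_mul_of_nonneg_left hω hnn
    _ = _ := by ring

lemma kernel_even {Φ h : EuclideanSpace ℝ (Fin d) → ℝ} (hΦ : HasSpectralDensity Φ h)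
    (u : EuclideanSpace ℝ (Fin d)) : Φ (-u) = Φ u := by
  rw [hΦ.2.2, hΦ.2.2]
  refine integral_congr_ae (Filter.Eventually.of_forall fun ω => ?_)
  simp only [inner_neg_left, Real.cos_neg]

lemma cs_quadform {ι : Type*} [Fintype ι] (B : ι → ι → ℝ) (hsym : ∀ j k, B j k = B k j)
    (hpsd : ∀ u : ι → ℝ, 0 ≤ ∑ j, ∑ k, u j * u k * B j k) (u v : ι → ℝ) :
    (∑ j, ∑ k, u j * v k * B j k) ^ 2
      ≤ (∑ j, ∑ k, u j * u k * B j k) * (∑ j, ∑ k, v j * v k * B j k) := by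
  have hswap : ∑ j, ∑ k, v j * u k * B j k = ∑ j, ∑ k, u j * v k * B j k := by
    rw [Finset.sum_comm]
    exact Finset.sum_congr rfl fun j _ => Finset.sum_congr rfl fun k _ => by
      rw [hsym k j]; ring
  have key : ∀ t : ℝ, 0 ≤ (∑ j, ∑ k, v j * v k * B j k) * (t * t)
      + (2 * ∑ j, ∑ k, u j * v k * B j k) * t + ∑ j, ∑ k, u j * u k * B j k := by
    intro t
    have h := hpsd (fun j => u j + t * v j)
    have hexp : ∑ j, ∑ k, (u j + t * v j) * (u k + t * v k) * B j k
        = (∑ j, ∑ k, u j * u k * B j k) + t * (∑ j, ∑ k, u j * v k * B j k)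
          + t * (∑ j, ∑ k, v j * u k * B j k) + t * t * (∑ j, ∑ k, v j * v k * B j k) := by
      simp only [Finset.mul_sum, ← Finset.sum_add_distrib]
      exact Finset.sum_congr rfl fun j _ => Finset.sum_congr rfl fun k _ => by ring
    rw [hexp, hswap] at h
    linarith
  have hd := discrim_le_zero key
  rw [discrim] at hd
  nlinarith [hd]

lemma one_sub_kernel_le {Φ h : EuclideanSpace ℝ (Fin d) → ℝ}
    (hΦ : HasSpectralDensity Φ h) (hΦ0 : Φ 0 = 1) {α A₀ : ℝ}
    (hα0 : 0 < α) (hα1 : α ≤ 1)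
    (hint : Integrable fun ω : EuclideanSpace ℝ (Fin d) => ‖ω‖ ^ α * h ω)
    (hA : (∫ ω, ‖ω‖ ^ α * h ω) ≤ A₀) (u : EuclideanSpace ℝ (Fin d)) :
    1 - Φ u ≤ 2 * A₀ * ‖u‖ ^ α := by
  have hΦu : Φ u = ∫ ω, Real.cos ⟪u, ω⟫ * h ω := hΦ.2.2 u
  have h1 : (1:ℝ) = ∫ ω, h ω := by
    have := hΦ.2.2 0
    rw [hΦ0] at this
    rw [this]
    refine integral_congr_ae (Filter.Eventually.of_forall fun ω => ?_)
    simp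
  have hsub : 1 - Φ u = ∫ ω, (1 - Real.cos ⟪u, ω⟫) * h ω := by
    have hcint : Integrable fun ω => Real.cos ⟪u, ω⟫ * h ω := by
      refine hΦ.2.1.bdd_mul (c := 1) ?_ (Filter.Eventually.of_forall fun x => by simpa using Real.abs_cos_le_one _)
      exact (Real.continuous_cos.comp (continuous_const.inner continuous_id)).aestronglyMeasurable
    have heq : ∫ ω, (1 - Real.cos ⟪u, ω⟫) * h ω
        = (∫ ω, h ω) - ∫ ω, Real.cos ⟪u, ω⟫ * h ω := by
      rw [← integral_sub hΦ.2.1 hcint]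
      refine integral_congr_ae (Filter.Eventually.of_forall fun ω => ?_)
      simp only
      ring
    rw [heq, ← h1, ← hΦu]
  rw [hsub]
  have hmono : (∫ ω, (1 - Real.cos ⟪u, ω⟫) * h ω)
      ≤ ∫ ω, 2 * ‖u‖ ^ α * (‖ω‖ ^ α * h ω) := by
    refine integral_mono ?_ (hint.const_mul _) fun ω => ?_
    · refine hΦ.2.1.bdd_mul (c := 2) ?_ (Filter.Eventually.of_forall fun x => ?_)
      · exact (continuous_const.sub (Real.continuous_cos.comp
          (continuous_const.inner continuous_id))).aestronglyMeasurable
      · have := Real.abs_cos_le_one (⟪u, x⟫ : ℝ)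
        rw [Real.norm_eq_abs]
        rw [abs_le] at *
        constructor <;> linarith [this.1, this.2]
    · have hc : 1 - Real.cos ⟪u, ω⟫ ≤ 2 * |(⟪u, ω⟫ : ℝ)| ^ α := one_sub_cos_le hα0 hα1 _
      have hr : |(⟪u, ω⟫ : ℝ)| ^ α ≤ ‖u‖ ^ α * ‖ω‖ ^ α := by
        rw [← Real.mul_rpow (norm_nonneg u) (norm_nonneg ω)]
        exact Real.rpow_le_rpow (abs_nonneg _) (abs_real_inner_le_norm u ω) hα0.le
      have hh := hΦ.1 ω
      have h2 : (1 - Real.cos ⟪u, ω⟫) * h ω ≤ (2 * (‖u‖ ^ α * ‖ω‖ ^ α)) * h ω := by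
        apply mul_le_mul_of_nonneg_right _ hh
        linarith
      calc (1 - Real.cos ⟪u, ω⟫) * h ω ≤ (2 * (‖u‖ ^ α * ‖ω‖ ^ α)) * h ω := h2
        _ = 2 * ‖u‖ ^ α * (‖ω‖ ^ α * h ω) := by ring
  calc (∫ ω, (1 - Real.cos ⟪u, ω⟫) * h ω) ≤ ∫ ω, 2 * ‖u‖ ^ α * (‖ω‖ ^ α * h ω) := hmono
    _ = 2 * ‖u‖ ^ α * ∫ ω, ‖ω‖ ^ α * h ω := integral_const_mul _ _
    _ ≤ 2 * A₀ * ‖u‖ ^ α := by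
        have h3 : (0:ℝ) ≤ ‖u‖ ^ α := Real.rpow_nonneg (norm_nonneg u) α
        nlinarith

def Bform {d : ℕ} {ι : Type*} [Fintype ι] (F : EuclideanSpace ℝ (Fin d) → ℝ)
    (q : ι → EuclideanSpace ℝ (Fin d)) (u v : ι → ℝ) : ℝ :=
  ∑ j, ∑ k, u j * v k * F (q j - q k)

lemma Bform_elim {d n : ℕ} (F : EuclideanSpace ℝ (Fin d) → ℝ)
    (X : Fin n → EuclideanSpace ℝ (Fin d)) (y z : EuclideanSpace ℝ (Fin d))
    (un vn : Fin n → ℝ) (b1 b2 c1 c2 : ℝ) :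
    Bform F (Sum.elim X ![y, z]) (Sum.elim un ![b1, b2]) (Sum.elim vn ![c1, c2]) =
      (∑ j, ∑ k, un j * vn k * F (X j - X k))
      + (∑ j, un j * c1 * F (X j - y)) + (∑ j, un j * c2 * F (X j - z))
      + (∑ k, b1 * vn k * F (y - X k)) + (∑ k, b2 * vn k * F (z - X k))
      + b1*c1*F (y-y) + b1*c2*F (y-z) + b2*c1*F (z-y) + b2*c2*F (z-z) := by
  simp only [Bform, Fintype.sum_sum_type, Fin.sum_univ_two, Sum.elim_inl, Sum.elim_inr,
    Matrix.cons_val_zero, Matrix.cons_val_one, Matrix.head_cons, Finset.sum_add_distrib,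
    Finset.mul_sum, Finset.sum_mul, mul_add, add_mul]
  ring_nf
  simp only [mul_comm c1, mul_comm c2]

lemma neg_one_le_kernel {d : ℕ} {Φ h : EuclideanSpace ℝ (Fin d) → ℝ}
    (hΦ : HasSpectralDensity Φ h) (hΦ0 : Φ 0 = 1) (u : EuclideanSpace ℝ (Fin d)) :
    -1 ≤ Φ u := by
  have h1 : (1:ℝ) = ∫ ω, h ω := by
    have h2 := hΦ.2.2 0
    rw [hΦ0] at h2
    rw [h2]
    refine integral_congr_ae (Filter.Eventually.of_forall fun ω => ?_)
    simp
  rw [hΦ.2.2 u, h1, ← integral_neg]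
  refine integral_mono hΦ.2.1.neg (integrable_cos_mul hΦ.2.1 u) fun ω => ?_
  have := Real.neg_one_le_cos (⟪u, ω⟫ : ℝ)
  nlinarith [hΦ.1 ω]

lemma sq_le_sq_aux {b y : ℝ} (h : b ^ 2 ≤ y ^ 2) (hy : 0 ≤ y) : b ≤ y :=
  calc b ≤ |b| := le_abs_self b
    _ = Real.sqrt (b ^ 2) := (Real.sqrt_sq_eq_abs b).symm
    _ ≤ Real.sqrt (y ^ 2) := Real.sqrt_le_sqrt h
    _ = y := by rw [Real.sqrt_sq_eq_abs, abs_of_nonneg hy]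

set_option maxHeartbeats 2000000 in
theorem kriging_canonical_pseudometric_bound (α A₀ A₁ : ℝ)
    (hα0 : 0 < α) (hα1 : α ≤ 1) (hA₀ : 0 < A₀) (hA₁ : 0 < A₁) :
    ∃ C > (0 : ℝ),
      ∀ (d : ℕ) (Ψ g Φ h : EuclideanSpace ℝ (Fin d) → ℝ),
        HasSpectralDensity Ψ g → HasSpectralDensity Φ h →
        Ψ 0 = 1 → Φ 0 = 1 →
        (∀ᵐ ω ∂(volume : Measure (EuclideanSpace ℝ (Fin d))), g ω ≤ A₁ ^ 2 * h ω) →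
        Integrable (fun ω : EuclideanSpace ℝ (Fin d) => ‖ω‖ ^ α * h ω) →
        (∫ ω, ‖ω‖ ^ α * h ω) ≤ A₀ →
        ∀ (n : ℕ) (X : Fin n → EuclideanSpace ℝ (Fin d)), Function.Injective X →
        ∀ (K K₁ : Matrix (Fin n) (Fin n) ℝ),
          K = Matrix.of (fun j k => Φ (X j - X k)) →
          K₁ = Matrix.of (fun j k => Ψ (X j - X k)) →
          K.PosDef →
        ∀ (Ω : Set (EuclideanSpace ℝ (Fin d)))
          (r r₁ : EuclideanSpace ℝ (Fin d) → Fin n → ℝ),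
          r = (fun x j => Φ (x - X j)) → r₁ = (fun x j => Ψ (x - X j)) →
        ∀ (P : ℝ), 0 < P → P ≤ 1 →
          (∀ y ∈ Ω, 1 - r y ⬝ᵥ K⁻¹ *ᵥ r y ≤ P ^ 2) →
        ∀ (e : EuclideanSpace ℝ (Fin d) → ℝ)
          (c : EuclideanSpace ℝ (Fin d) → EuclideanSpace ℝ (Fin d) → ℝ),
          e = (fun x => Ψ 0 - 2 * (r x ⬝ᵥ K⁻¹ *ᵥ r₁ x) + r x ⬝ᵥ (K⁻¹ * K₁ * K⁻¹) *ᵥ r x) →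
          c = (fun x x' => Ψ (x - x') - r x' ⬝ᵥ K⁻¹ *ᵥ r₁ x - r₁ x' ⬝ᵥ K⁻¹ *ᵥ r x
                + r x ⬝ᵥ (K⁻¹ * K₁ * K⁻¹) *ᵥ r x') →
        ∀ x ∈ Ω, ∀ x' ∈ Ω,
          e x + e x' - 2 * c x x' ≤ C * P * ‖x - x'‖ ^ (α / 4) := by
  refine ⟨4 * A₁ ^ 2 * (Real.sqrt A₀ + 1), by positivity, ?_⟩
  intro d Ψ g Φ h hΨ hΦ hΨ0 hΦ0 hgh hint hA n X hX K K₁ hKdef hK₁def hK Ω r r₁ hrdef hr₁def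
    P hP0 hP1 hPow e c hedef hcdef x hx x' hx'
  -- kernel symmetry facts
  have hΦflip : ∀ u v : EuclideanSpace ℝ (Fin d), Φ (u - v) = Φ (v - u) := fun u v => by
    rw [← kernel_even hΦ (v - u), neg_sub]
  have hΨflip : ∀ u v : EuclideanSpace ℝ (Fin d), Ψ (u - v) = Ψ (v - u) := fun u v => by
    rw [← kernel_even hΨ (v - u), neg_sub]
  -- matrix facts
  have hdet : IsUnit K.det := hK.det_pos.ne'.isUnit
  have hKT : Kᵀ = K := by
    ext j k
    rw [Matrix.transpose_apply, hKdef, Matrix.of_apply, Matrix.of_apply, hΦflip]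
  have hKinvT : K⁻¹ᵀ = K⁻¹ := by rw [Matrix.transpose_nonsing_inv, hKT]
  have hmove : ∀ v w : Fin n → ℝ, v ⬝ᵥ K⁻¹ *ᵥ w = (K⁻¹ *ᵥ v) ⬝ᵥ w := by
    intro v w
    rw [Matrix.dotProduct_mulVec, ← hKinvT, Matrix.vecMul_transpose, hKinvT]
  set a : Fin n → ℝ := K⁻¹ *ᵥ r x with ha
  set a' : Fin n → ℝ := K⁻¹ *ᵥ r x' with ha'
  have hKa : K *ᵥ a = r x := by
    rw [ha, Matrix.mulVec_mulVec, Matrix.mul_nonsing_inv _ hdet, Matrix.one_mulVec]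
  have hKa' : K *ᵥ a' = r x' := by
    rw [ha', Matrix.mulVec_mulVec, Matrix.mul_nonsing_inv _ hdet, Matrix.one_mulVec]
  -- reduction of double sums
  have hdouble : ∀ u v : Fin n → ℝ, ∑ j, ∑ k, u j * v k * Φ (X j - X k)
      = ∑ j, u j * (K *ᵥ v) j := by
    intro u v
    refine Finset.sum_congr rfl fun j _ => ?_
    have h1 : (K *ᵥ v) j = ∑ k, Φ (X j - X k) * v k := by
      simp [hKdef, Matrix.mulVec, dotProduct]
    rw [h1, Finset.mul_sum]
    exact Finset.sum_congr rfl fun k _ => by ring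
  have hdouble₁ : ∀ u v : Fin n → ℝ, ∑ j, ∑ k, u j * v k * Ψ (X j - X k)
      = ∑ j, u j * (K₁ *ᵥ v) j := by
    intro u v
    refine Finset.sum_congr rfl fun j _ => ?_
    have h1 : (K₁ *ᵥ v) j = ∑ k, Ψ (X j - X k) * v k := by
      simp [hK₁def, Matrix.mulVec, dotProduct]
    rw [h1, Finset.mul_sum]
    exact Finset.sum_congr rfl fun k _ => by ring
  have hTsym : ∀ u v : Fin n → ℝ, ∑ j, u j * (K₁ *ᵥ v) j = ∑ j, v j * (K₁ *ᵥ u) j := by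
    intro u v
    rw [← hdouble₁ u v, ← hdouble₁ v u, Finset.sum_comm]
    exact Finset.sum_congr rfl fun k _ => Finset.sum_congr rfl fun j _ => by
      rw [hΨflip (X j) (X k)]; ring
  -- points and coefficient vectors
  set q : (Fin n ⊕ Fin 2) → EuclideanSpace ℝ (Fin d) := Sum.elim X ![x, x'] with hq
  set μx : (Fin n ⊕ Fin 2) → ℝ := Sum.elim (fun j => -(a j)) ![(1:ℝ), 0] with hμx
  set μx' : (Fin n ⊕ Fin 2) → ℝ := Sum.elim (fun j => -(a' j)) ![(0:ℝ), 1] with hμx'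
  set dd : (Fin n ⊕ Fin 2) → ℝ := Sum.elim (fun _ => (0:ℝ)) ![(1:ℝ), -1] with hdd
  set μ : (Fin n ⊕ Fin 2) → ℝ := Sum.elim (fun j => a' j - a j) ![(1:ℝ), -1] with hμ
  
  -- pointwise kernel/vector facts
  have hrx : ∀ (y : EuclideanSpace ℝ (Fin d)) (k : Fin n), Φ (y - X k) = r y k := by
    intro y k; rw [hrdef]
  have hrxf : ∀ (y : EuclideanSpace ℝ (Fin d)) (k : Fin n), Φ (X k - y) = r y k := by
    intro y k; rw [hΦflip, hrdef]
  have hr₁x : ∀ (y : EuclideanSpace ℝ (Fin d)) (k : Fin n), Ψ (y - X k) = r₁ y k := by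
    intro y k; rw [hr₁def]
  have hr₁xf : ∀ (y : EuclideanSpace ℝ (Fin d)) (k : Fin n), Ψ (X k - y) = r₁ y k := by
    intro y k; rw [hΨflip, hr₁def]
  -- the Φ-side identities
  have hEX : Bform Φ q μx μx = 1 - r x ⬝ᵥ K⁻¹ *ᵥ r x := by
    rw [hq, hμx, Bform_elim]
    simp only [mul_zero, zero_mul, mul_one, one_mul, Finset.sum_const_zero, add_zero,
      zero_add, sub_self, hΦ0]
    have h1 : ∑ j, ∑ k, (-(a j)) * (-(a k)) * Φ (X j - X k) = ∑ j, a j * r x j := by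
      have h2 : ∑ j, ∑ k, (-(a j)) * (-(a k)) * Φ (X j - X k)
          = ∑ j, ∑ k, a j * a k * Φ (X j - X k) :=
        Finset.sum_congr rfl fun j _ => Finset.sum_congr rfl fun k _ => by ring
      rw [h2, hdouble a a, hKa]
    have h2 : ∑ j, (-(a j)) * Φ (X j - x) = -∑ j, a j * r x j := by
      rw [← Finset.sum_neg_distrib]
      exact Finset.sum_congr rfl fun j _ => by rw [hrxf x j]; ring
    have h3 : ∑ k, (-(a k)) * Φ (x - X k) = -∑ j, a j * r x j := by
      rw [← Finset.sum_neg_distrib]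
      exact Finset.sum_congr rfl fun k _ => by rw [hrx x k]; ring
    have h4 : r x ⬝ᵥ K⁻¹ *ᵥ r x = ∑ j, a j * r x j := by
      rw [hmove, ← ha, dotProduct]
    rw [h1, h2, h3, h4]
    ring
  
  have hEX' : Bform Φ q μx' μx' = 1 - r x' ⬝ᵥ K⁻¹ *ᵥ r x' := by
    rw [hq, hμx', Bform_elim]
    simp only [mul_zero, zero_mul, mul_one, one_mul, Finset.sum_const_zero, add_zero,
      zero_add, sub_self, hΦ0]
    have h1 : ∑ j, ∑ k, (-(a' j)) * (-(a' k)) * Φ (X j - X k) = ∑ j, a' j * r x' j := by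
      have h2 : ∑ j, ∑ k, (-(a' j)) * (-(a' k)) * Φ (X j - X k)
          = ∑ j, ∑ k, a' j * a' k * Φ (X j - X k) :=
        Finset.sum_congr rfl fun j _ => Finset.sum_congr rfl fun k _ => by ring
      rw [h2, hdouble a' a', hKa']
    have h2 : ∑ j, (-(a' j)) * Φ (X j - x') = -∑ j, a' j * r x' j := by
      rw [← Finset.sum_neg_distrib]
      exact Finset.sum_congr rfl fun j _ => by rw [hrxf x' j]; ring
    have h3 : ∑ k, (-(a' k)) * Φ (x' - X k) = -∑ j, a' j * r x' j := by
      rw [← Finset.sum_neg_distrib]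
      exact Finset.sum_congr rfl fun k _ => by rw [hrx x' k]; ring
    have h4 : r x' ⬝ᵥ K⁻¹ *ᵥ r x' = ∑ j, a' j * r x' j := by
      rw [hmove, ← ha', dotProduct]
    rw [h1, h2, h3, h4]
    ring
  have hDD : Bform Φ q dd dd = 2 - 2 * Φ (x - x') := by
    rw [hq, hdd, Bform_elim]
    simp only [mul_zero, zero_mul, mul_one, one_mul, Finset.sum_const_zero, add_zero,
      zero_add, sub_self, hΦ0]
    rw [hΦflip x' x]
    ring
  have hMXD : Bform Φ q μx dd
      = 1 - Φ (x - x') - (∑ j, a j * r x j) + ∑ j, a j * r x' j := by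
    rw [hq, hμx, hdd, Bform_elim]
    simp only [mul_zero, zero_mul, mul_one, one_mul, Finset.sum_const_zero, add_zero,
      zero_add, sub_self, hΦ0]
    have h2 : ∑ j, (-(a j)) * Φ (X j - x) = -∑ j, a j * r x j := by
      rw [← Finset.sum_neg_distrib]
      exact Finset.sum_congr rfl fun j _ => by rw [hrxf x j]; ring
    have h3 : ∑ j, (-(a j)) * -1 * Φ (X j - x') = ∑ j, a j * r x' j :=
      Finset.sum_congr rfl fun j _ => by rw [hrxf x' j]; ring
    rw [h2, h3]
    ring
  have hMX'D : Bform Φ q μx' dd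
      = Φ (x - x') - 1 - (∑ j, a' j * r x j) + ∑ j, a' j * r x' j := by
    rw [hq, hμx', hdd, Bform_elim]
    simp only [mul_zero, zero_mul, mul_one, one_mul, Finset.sum_const_zero, add_zero,
      zero_add, sub_self, hΦ0]
    have h2 : ∑ j, (-(a' j)) * Φ (X j - x) = -∑ j, a' j * r x j := by
      rw [← Finset.sum_neg_distrib]
      exact Finset.sum_congr rfl fun j _ => by rw [hrxf x j]; ring
    have h3 : ∑ j, (-(a' j)) * -1 * Φ (X j - x') = ∑ j, a' j * r x' j :=
      Finset.sum_congr rfl fun j _ => by rw [hrxf x' j]; ring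
    rw [h2, h3, hΦflip x' x]
    ring
  have hKb : K *ᵥ (fun k => a' k - a k) = fun j => r x' j - r x j := by
    have : (fun k => a' k - a k) = a' - a := rfl
    rw [this, Matrix.mulVec_sub, hKa, hKa']
    rfl
  have hMM : Bform Φ q μ μ
      = 2 - 2 * Φ (x - x') - (∑ j, a j * r x j) + (∑ j, a j * r x' j)
        + (∑ j, a' j * r x j) - ∑ j, a' j * r x' j := by
    rw [hq, hμ, Bform_elim]
    simp only [mul_zero, zero_mul, mul_one, one_mul, Finset.sum_const_zero, add_zero,
      zero_add, sub_self, hΦ0]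
    have h1 : ∑ j, ∑ k, (a' j - a j) * (a' k - a k) * Φ (X j - X k)
        = (∑ j, a' j * r x' j) - (∑ j, a' j * r x j) - (∑ j, a j * r x' j)
          + ∑ j, a j * r x j := by
      rw [hdouble (fun j => a' j - a j) (fun k => a' k - a k), hKb]
      simp only [sub_mul, mul_sub, Finset.sum_sub_distrib]
      ring
    have h2 : ∑ j, (a' j - a j) * Φ (X j - x)
        = (∑ j, a' j * r x j) - ∑ j, a j * r x j := by
      rw [← Finset.sum_sub_distrib]
      exact Finset.sum_congr rfl fun j _ => by rw [hrxf x j]; ring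
    have h3 : ∑ j, (a' j - a j) * -1 * Φ (X j - x')
        = (∑ j, a j * r x' j) - ∑ j, a' j * r x' j := by
      rw [← Finset.sum_sub_distrib]
      exact Finset.sum_congr rfl fun j _ => by rw [hrxf x' j]; ring
    have h4 : ∑ k, (a' k - a k) * Φ (x - X k)
        = (∑ j, a' j * r x j) - ∑ j, a j * r x j := by
      rw [← Finset.sum_sub_distrib]
      exact Finset.sum_congr rfl fun k _ => by rw [hrx x k]; ring
    have h5 : ∑ k, -1 * (a' k - a k) * Φ (x' - X k)
        = (∑ j, a j * r x' j) - ∑ j, a' j * r x' j := by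
      rw [← Finset.sum_sub_distrib]
      exact Finset.sum_congr rfl fun k _ => by rw [hrx x' k]; ring
    rw [h1, h2, h3, h4, h5, hΦflip x' x]
    ring
  
  have hK₁b : K₁ *ᵥ (fun k => a' k - a k) = fun j => (K₁ *ᵥ a') j - (K₁ *ᵥ a) j := by
    have : (fun k => a' k - a k) = a' - a := rfl
    rw [this, Matrix.mulVec_sub]
    rfl
  have hQΨ : Bform Ψ q μ μ = e x + e x' - 2 * c x x' := by
    rw [hq, hμ, Bform_elim]
    simp only [mul_zero, zero_mul, mul_one, one_mul, Finset.sum_const_zero, add_zero,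
      zero_add, sub_self, hΨ0]
    have h1 : ∑ j, ∑ k, (a' j - a j) * (a' k - a k) * Ψ (X j - X k)
        = (∑ j, a' j * (K₁ *ᵥ a') j) - (∑ j, a' j * (K₁ *ᵥ a) j)
          - (∑ j, a j * (K₁ *ᵥ a') j) + ∑ j, a j * (K₁ *ᵥ a) j := by
      rw [hdouble₁ (fun j => a' j - a j) (fun k => a' k - a k), hK₁b]
      simp only [sub_mul, mul_sub, Finset.sum_sub_distrib]
      ring
    have h2 : ∑ j, (a' j - a j) * Ψ (X j - x) = (∑ j, a' j * r₁ x j) - ∑ j, a j * r₁ x j := by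
      rw [← Finset.sum_sub_distrib]
      exact Finset.sum_congr rfl fun j _ => by rw [hr₁xf x j]; ring
    have h3 : ∑ j, (a' j - a j) * -1 * Ψ (X j - x')
        = (∑ j, a j * r₁ x' j) - ∑ j, a' j * r₁ x' j := by
      rw [← Finset.sum_sub_distrib]
      exact Finset.sum_congr rfl fun j _ => by rw [hr₁xf x' j]; ring
    have h4 : ∑ k, (a' k - a k) * Ψ (x - X k) = (∑ j, a' j * r₁ x j) - ∑ j, a j * r₁ x j := by
      rw [← Finset.sum_sub_distrib]
      exact Finset.sum_congr rfl fun k _ => by rw [hr₁x x k]; ring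
    have h5 : ∑ k, -1 * (a' k - a k) * Ψ (x' - X k)
        = (∑ j, a j * r₁ x' j) - ∑ j, a' j * r₁ x' j := by
      rw [← Finset.sum_sub_distrib]
      exact Finset.sum_congr rfl fun k _ => by rw [hr₁x x' k]; ring
    have hKKK : ∀ v : Fin n → ℝ, (K⁻¹ * K₁ * K⁻¹) *ᵥ v = K⁻¹ *ᵥ (K₁ *ᵥ (K⁻¹ *ᵥ v)) := by
      intro v
      rw [Matrix.mulVec_mulVec, Matrix.mulVec_mulVec]
    have he1 : r x ⬝ᵥ K⁻¹ *ᵥ r₁ x = ∑ j, a j * r₁ x j := by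
      rw [hmove, ← ha, dotProduct]
    have he2 : r x' ⬝ᵥ K⁻¹ *ᵥ r₁ x' = ∑ j, a' j * r₁ x' j := by
      rw [hmove, ← ha', dotProduct]
    have he3 : r x ⬝ᵥ (K⁻¹ * K₁ * K⁻¹) *ᵥ r x = ∑ j, a j * (K₁ *ᵥ a) j := by
      rw [hKKK, hmove, ← ha, dotProduct]
    have he4 : r x' ⬝ᵥ (K⁻¹ * K₁ * K⁻¹) *ᵥ r x' = ∑ j, a' j * (K₁ *ᵥ a') j := by
      rw [hKKK, hmove, ← ha', dotProduct]
    have he5 : r x' ⬝ᵥ K⁻¹ *ᵥ r₁ x = ∑ j, a' j * r₁ x j := by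
      rw [hmove, ← ha', dotProduct]
    have he6 : r₁ x' ⬝ᵥ K⁻¹ *ᵥ r x = ∑ j, a j * r₁ x' j := by
      rw [← ha, dotProduct]
      exact Finset.sum_congr rfl fun j _ => mul_comm _ _
    have he7 : r x ⬝ᵥ (K⁻¹ * K₁ * K⁻¹) *ᵥ r x' = ∑ j, a j * (K₁ *ᵥ a') j := by
      rw [hKKK, hmove, ← ha, ← ha', dotProduct]
    have hU : ∑ j, a j * (K₁ *ᵥ a') j = ∑ j, a' j * (K₁ *ᵥ a) j := hTsym a a'
    rw [h1, h2, h3, h4, h5]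
    simp only [hedef, hcdef]
    rw [he1, he2, he3, he4, he5, he6, he7, hΨ0, hΨflip x' x, hU]
    ring
  
  have hMMnn : 0 ≤ Bform Φ q μ μ := by simp only [Bform]; exact spectral_nonneg hΦ q μ
  have hDDnn : 0 ≤ Bform Φ q dd dd := by simp only [Bform]; exact spectral_nonneg hΦ q dd
  have hcomp : Bform Ψ q μ μ ≤ A₁ ^ 2 * Bform Φ q μ μ := by
    simp only [Bform]; exact spectral_compare hΨ hΦ hgh q μ
  have hPB : Bform Φ q μx μx ≤ P ^ 2 := by rw [hEX]; exact hPow x hx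
  have hPB' : Bform Φ q μx' μx' ≤ P ^ 2 := by rw [hEX']; exact hPow x' hx'
  have hcs : ∀ u v : (Fin n ⊕ Fin 2) → ℝ,
      (Bform Φ q u v) ^ 2 ≤ Bform Φ q u u * Bform Φ q v v := by
    intro u v
    simpa only [Bform] using cs_quadform (fun i j => Φ (q i - q j))
      (fun i j => hΦflip (q i) (q j)) (fun w => spectral_nonneg hΦ q w) u v
  set δ : ℝ := Real.sqrt (Bform Φ q dd dd) with hδ
  have hδnn : 0 ≤ δ := Real.sqrt_nonneg _
  have hδsq : δ ^ 2 = Bform Φ q dd dd := Real.sq_sqrt hDDnn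
  have hb1 : Bform Φ q μx dd ≤ P * δ := by
    refine sq_le_sq_aux ?_ (mul_nonneg hP0.le hδnn)
    calc (Bform Φ q μx dd) ^ 2 ≤ Bform Φ q μx μx * Bform Φ q dd dd := hcs μx dd
      _ ≤ P ^ 2 * Bform Φ q dd dd := mul_le_mul_of_nonneg_right hPB hDDnn
      _ = (P * δ) ^ 2 := by rw [← hδsq]; ring
  have hb2 : -(Bform Φ q μx' dd) ≤ P * δ := by
    refine sq_le_sq_aux ?_ (mul_nonneg hP0.le hδnn)
    calc (-(Bform Φ q μx' dd)) ^ 2 = (Bform Φ q μx' dd) ^ 2 := by ring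
      _ ≤ Bform Φ q μx' μx' * Bform Φ q dd dd := hcs μx' dd
      _ ≤ P ^ 2 * Bform Φ q dd dd := mul_le_mul_of_nonneg_right hPB' hDDnn
      _ = (P * δ) ^ 2 := by rw [← hδsq]; ring
  have hsplitMM : Bform Φ q μ μ = Bform Φ q μx dd - Bform Φ q μx' dd := by
    rw [hMM, hMXD, hMX'D]; ring
  have hMMle : Bform Φ q μ μ ≤ 2 * P * δ := by rw [hsplitMM]; linarith
  have hδleA : δ ^ 2 ≤ 4 * A₀ * ‖x - x'‖ ^ α := by
    rw [hδsq, hDD]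
    have := one_sub_kernel_le hΦ hΦ0 hα0 hα1 hint hA (x - x')
    linarith
  have hδ2 : δ ≤ 2 := by
    refine sq_le_sq_aux ?_ (by norm_num)
    rw [hδsq, hDD]
    have h1 := neg_one_le_kernel hΦ hΦ0 (x - x')
    have h4 : (2:ℝ) ^ 2 = 4 := by norm_num
    rw [h4]
    linarith
  have hQle : e x + e x' - 2 * c x x' ≤ A₁ ^ 2 * (2 * P * δ) := by
    rw [← hQΨ]
    calc Bform Ψ q μ μ ≤ A₁ ^ 2 * Bform Φ q μ μ := hcomp
      _ ≤ A₁ ^ 2 * (2 * P * δ) := mul_le_mul_of_nonneg_left hMMle (sq_nonneg A₁)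
  have hτnn : (0:ℝ) ≤ ‖x - x'‖ := norm_nonneg _
  have hτ4nn : (0:ℝ) ≤ ‖x - x'‖ ^ (α / 4) := Real.rpow_nonneg hτnn _
  have hsA : Real.sqrt A₀ ^ 2 = A₀ := Real.sq_sqrt hA₀.le
  rcases le_or_gt ‖x - x'‖ 1 with hcase | hcase
  · have hm : ‖x - x'‖ ^ α ≤ (‖x - x'‖ ^ (α / 4)) ^ 2 := by
      have h1 : (‖x - x'‖ ^ (α / 4)) ^ 2 = ‖x - x'‖ ^ (α / 2) := by
        rw [← Real.rpow_natCast (‖x - x'‖ ^ (α / 4)) 2, ← Real.rpow_mul hτnn]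
        congr 1
        ring
      rw [h1]
      rcases eq_or_lt_of_le hτnn with h0 | h0
      · rw [← h0, Real.zero_rpow (ne_of_gt hα0),
          Real.zero_rpow (by positivity : (0:ℝ) < α / 2).ne']
      · exact Real.rpow_le_rpow_of_exponent_ge h0 hcase (by linarith)
    have hδle : δ ≤ 2 * Real.sqrt A₀ * ‖x - x'‖ ^ (α / 4) := by
      refine sq_le_sq_aux ?_ (by positivity)
      have h2 : (2 * Real.sqrt A₀ * ‖x - x'‖ ^ (α / 4)) ^ 2
          = 4 * A₀ * (‖x - x'‖ ^ (α / 4)) ^ 2 := by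
        rw [show (2 * Real.sqrt A₀ * ‖x - x'‖ ^ (α / 4)) ^ 2
          = 4 * Real.sqrt A₀ ^ 2 * (‖x - x'‖ ^ (α / 4)) ^ 2 by ring, hsA]
      rw [h2]
      calc δ ^ 2 ≤ 4 * A₀ * ‖x - x'‖ ^ α := hδleA
        _ ≤ 4 * A₀ * (‖x - x'‖ ^ (α / 4)) ^ 2 :=
            mul_le_mul_of_nonneg_left hm (by positivity)
    calc e x + e x' - 2 * c x x' ≤ A₁ ^ 2 * (2 * P * δ) := hQle
      _ ≤ A₁ ^ 2 * (2 * P * (2 * Real.sqrt A₀ * ‖x - x'‖ ^ (α / 4))) := by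
          have h2P : (0:ℝ) ≤ 2 * P := by positivity
          exact mul_le_mul_of_nonneg_left
            (mul_le_mul_of_nonneg_left hδle h2P) (sq_nonneg A₁)
      _ = 4 * A₁ ^ 2 * Real.sqrt A₀ * P * ‖x - x'‖ ^ (α / 4) := by ring
      _ ≤ 4 * A₁ ^ 2 * (Real.sqrt A₀ + 1) * P * ‖x - x'‖ ^ (α / 4) := by
          have h10 : (0:ℝ) ≤ A₁ ^ 2 * P * ‖x - x'‖ ^ (α / 4) := by positivity
          nlinarith [h10]
  · have hτ41 : (1:ℝ) ≤ ‖x - x'‖ ^ (α / 4) :=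
      Real.one_le_rpow hcase.le (by positivity)
    have h1 : (1:ℝ) ≤ (Real.sqrt A₀ + 1) * ‖x - x'‖ ^ (α / 4) := by
      nlinarith [Real.sqrt_nonneg A₀]
    calc e x + e x' - 2 * c x x' ≤ A₁ ^ 2 * (2 * P * δ) := hQle
      _ ≤ A₁ ^ 2 * (2 * P * 2) := by
          have h2P : (0:ℝ) ≤ 2 * P := by positivity
          exact mul_le_mul_of_nonneg_left
            (mul_le_mul_of_nonneg_left hδ2 h2P) (sq_nonneg A₁)
      _ = 4 * A₁ ^ 2 * P * 1 := by ring
      _ ≤ 4 * A₁ ^ 2 * P * ((Real.sqrt A₀ + 1) * ‖x - x'‖ ^ (α / 4)) := by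
          have h2P : (0:ℝ) ≤ 4 * A₁ ^ 2 * P := by positivity
          exact mul_le_mul_of_nonneg_left h1 h2P
      _ = 4 * A₁ ^ 2 * (Real.sqrt A₀ + 1) * P * ‖x - x'‖ ^ (α / 4) := by ring
end
end

section
/- For all real numbers R and b with 0 < R ≤ b, one has ∫_0^R √(log(b / ε)) dε ≤ R √(log(e · b / R)). -/
/-!
The integrand is bounded by the tangent line of the concave function `√` at
`c = log (e b / R)`: `√x ≤ (x + c) / (2 √c)`. Integrating over `(0, R]` and using
`∫₀ᴿ log (b / ε) dε = R log (e b / R) = R c` gives exactly `R √c`.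
-/

open MeasureTheory Real Set

theorem Real.sqrt_le_add_div_two_mul_sqrt {x c : ℝ} (hx : 0 ≤ x) (hc : 0 < c) :
    √x ≤ (x + c) / (2 * √c) := by
  rw [le_div_iff₀ (by positivity)]
  nlinarith [sq_nonneg (√x - √c), sq_sqrt hx, sq_sqrt hc.le]

theorem eqOn_log_const_div_uIoo {b : ℝ} (hb : b ≠ 0) (R : ℝ) :
    EqOn (fun x ↦ log b - log x) (fun x ↦ log (b / x)) (uIoo 0 R) := by
  intro x hx
  have hx0 : x ≠ 0 := by
    rintro rfl
    simp only [uIoo, mem_Ioo, min_lt_iff, lt_max_iff, lt_self_iff_false, false_or] at hx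
    linarith [hx.1, hx.2]
  exact (log_div hb hx0).symm

theorem intervalIntegrable_log_const_div (b R : ℝ) :
    IntervalIntegrable (fun x ↦ log (b / x)) volume 0 R := by
  by_cases hb : b = 0
  · simp [hb]
  exact (intervalIntegrable_const.sub intervalIntegral.intervalIntegrable_log').congr_uIoo
    (eqOn_log_const_div_uIoo hb R)

theorem integral_log_const_div {b : ℝ} (hb : b ≠ 0) (R : ℝ) :
    ∫ x in 0..R, log (b / x) = R * log (exp 1 * b / R) := by
  rw [← intervalIntegral.integral_congr_uIoo (eqOn_log_const_div_uIoo hb R),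
    intervalIntegral.integral_sub intervalIntegrable_const intervalIntegral.intervalIntegrable_log',
    intervalIntegral.integral_const, integral_log, smul_eq_mul]
  rcases eq_or_ne R 0 with rfl | hR
  · simp
  rw [log_div (by positivity) hR, log_mul (exp_ne_zero 1) hb, log_exp]
  ring

/-- The entropy-integral estimate used in Step 3 of the proof of Theorem 1 of
Wang, Tuo and Wu: for `0 < R ≤ b`, `∫_0^R √(log(b/ε)) dε ≤ R √(log(e b / R))`. -/
theorem entropy_integral_bound (R b : ℝ) (hR : 0 < R) (hRb : R ≤ b) :
    (∫ ε in Set.Ioc (0 : ℝ) R, Real.sqrt (Real.log (b / ε))) ≤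
      R * Real.sqrt (Real.log (Real.exp 1 * b / R)) := by
  set c := log (exp 1 * b / R)
  have hc : 0 < c := by
    refine log_pos ((lt_div_iff₀ hR).2 ?_)
    nlinarith [one_lt_exp_iff.2 one_pos]
  have hlog_nonneg : ∀ ε ∈ Ioc 0 R, 0 ≤ log (b / ε) := fun ε hε ↦
    log_nonneg ((one_le_div hε.1).2 (hε.2.trans hRb))
  have hint := intervalIntegrable_log_const_div b R
  calc ∫ ε in Ioc 0 R, √(log (b / ε))
      ≤ ∫ ε in Ioc 0 R, (log (b / ε) + c) / (2 * √c) :=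
        setIntegral_mono_of_nonneg (fun _ _ ↦ sqrt_nonneg _)
          (fun ε hε ↦ sqrt_le_add_div_two_mul_sqrt (hlog_nonneg ε hε) hc)
          ((hint.add intervalIntegrable_const).div_const _).1
    _ = (R * c + R * c) / (2 * √c) := by
        rw [← intervalIntegral.integral_of_le hR.le, intervalIntegral.integral_div,
          intervalIntegral.integral_add hint intervalIntegrable_const,
          integral_log_const_div (by linarith) R, intervalIntegral.integral_const, smul_eq_mul,
          sub_zero]
    _ = R * √c := by
        rw [← two_mul, mul_div_mul_left _ _ two_ne_zero, mul_div_assoc, div_sqrt]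
end
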